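/- Let M ∈ ℝ^{d_L × d_0} and let W_1,…,W_L be matrices of compatible dimensions with W_L⋯W_1 = M. Then for every j with 1 ≤ j ≤ L−1, ‖W_L⋯W_{j+1}‖_F² · ‖W_j⋯W_1‖_F² ≥ ‖M‖_*². -/

import Mathlib

/-!
Diagonalising `Mᴴ M = V diag(σ²) Vᴴ` yields the partial isometry `K = V diag(σ⁻¹) (M V)ᴴ`, for which
`K Kᴴ` is an orthogonal projection and `tr (K M) = ∑ σᵢ = ‖M‖_*`. If `M = A B`, Cauchy–Schwarz for
the trace pairing gives `‖M‖_* = tr ((B K) A) ≤ ‖B K‖_F ‖A‖_F ≤ ‖B‖_F ‖A‖_F`, and a partial product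
decomposition `M = (W_L ⋯ W_{j+1}) (W_j ⋯ W_1)` is such a factorisation.
-/

open Matrix Finset

noncomputable def frobNorm {m n : Type*} [Fintype m] [Fintype n] (M : Matrix m n ℝ) : ℝ :=
  Real.sqrt (∑ i, ∑ j, (M i j) ^ 2)

noncomputable def nuclearNorm {m n : Type*} [Fintype m] [Fintype n] [DecidableEq n]
    (M : Matrix m n ℝ) : ℝ :=
  ∑ i, Real.sqrt ((Matrix.isHermitian_conjTranspose_mul_self M).eigenvalues i)

namespace Matrix

variable {l m n : Type*} [Fintype l] [Fintype m] [Fintype n]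

lemma frobNorm_sq (A : Matrix m n ℝ) : frobNorm A ^ 2 = ∑ i, ∑ j, A i j ^ 2 :=
  Real.sq_sqrt (by positivity)

lemma frobNorm_sq_eq_trace (A : Matrix m n ℝ) : frobNorm A ^ 2 = (A * Aᴴ).trace := by
  rw [frobNorm_sq]
  simp [Matrix.trace, Matrix.mul_apply, sq]

lemma trace_mul_sq_le (A : Matrix m n ℝ) (B : Matrix n m ℝ) :
    (A * B).trace ^ 2 ≤ frobNorm A ^ 2 * frobNorm B ^ 2 := by
  have hAB : (A * B).trace = ∑ p : m × n, A p.1 p.2 * B p.2 p.1 := by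
    simp [Matrix.trace, Matrix.mul_apply, Fintype.sum_prod_type]
  have hB : frobNorm B ^ 2 = ∑ p : m × n, B p.2 p.1 ^ 2 := by
    rw [frobNorm_sq, Fintype.sum_prod_type, Finset.sum_comm]
  rw [hAB, hB, frobNorm_sq, ← Fintype.sum_prod_type']
  exact sum_mul_sq_le_sq_mul_sq _ _ _

lemma trace_mul_mul_conjTranspose_le (B : Matrix l n ℝ) {P : Matrix n n ℝ}
    (hP : IsStarProjection P) : (B * P * Bᴴ).trace ≤ (B * Bᴴ).trace := by
  have hPP : P * P = P := hP.isIdempotentElem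
  have hPstar : Pᴴ = P := hP.isSelfAdjoint
  -- `tr (B Bᴴ) - tr (B P Bᴴ) = ‖B - B P‖_F²`
  have h0 : 0 ≤ frobNorm (B - B * P) ^ 2 := sq_nonneg _
  rw [frobNorm_sq_eq_trace, conjTranspose_sub, conjTranspose_mul, hPstar, Matrix.sub_mul,
    Matrix.mul_sub, Matrix.mul_sub, Matrix.mul_assoc B P (P * Bᴴ), ← Matrix.mul_assoc P P,
    hPP] at h0
  simp only [trace_sub, Matrix.mul_assoc, sub_self, sub_zero] at h0
  rwa [Matrix.mul_assoc, ← sub_nonneg]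

lemma frobNorm_mul_sq_le (B : Matrix l n ℝ) {K : Matrix n m ℝ} (hK : K * Kᴴ * K = K) :
    frobNorm (B * K) ^ 2 ≤ frobNorm B ^ 2 := by
  have hKK : IsStarProjection (K * Kᴴ) :=
    ⟨by rw [IsIdempotentElem, ← Matrix.mul_assoc, hK],
      by rw [IsSelfAdjoint, star_eq_conjTranspose, conjTranspose_mul, conjTranspose_conjTranspose]⟩
  rw [frobNorm_sq_eq_trace, frobNorm_sq_eq_trace, conjTranspose_mul, ← Matrix.mul_assoc,
    Matrix.mul_assoc B]
  exact trace_mul_mul_conjTranspose_le B hKK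

lemma exists_orthogonal_conjTranspose_mul_self_eq_diagonal [DecidableEq n] (M : Matrix m n ℝ) :
    ∃ V : Matrix n n ℝ, Vᴴ * V = 1 ∧
      (M * V)ᴴ * (M * V) = diagonal (isHermitian_conjTranspose_mul_self M).eigenvalues := by
  set hH := isHermitian_conjTranspose_mul_self M
  refine ⟨hH.eigenvectorUnitary, Unitary.coe_star_mul_self hH.eigenvectorUnitary, ?_⟩
  have := hH.conjStarAlgAut_star_eigenvectorUnitary
  rw [Unitary.conjStarAlgAut_star_apply, star_eq_conjTranspose] at this
  rw [conjTranspose_mul, Matrix.mul_assoc, ← Matrix.mul_assoc Mᴴ, ← Matrix.mul_assoc, this]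
  rfl

lemma exists_partialIsometry_trace_mul_eq_nuclearNorm [DecidableEq n] (M : Matrix m n ℝ) :
    ∃ K : Matrix n m ℝ, K * Kᴴ * K = K ∧ (K * M).trace = nuclearNorm M := by
  obtain ⟨V, hVV, hNN⟩ := exists_orthogonal_conjTranspose_mul_self_eq_diagonal M
  set σ : n → ℝ := fun i => √((isHermitian_conjTranspose_mul_self M).eigenvalues i)
  have hσ : (isHermitian_conjTranspose_mul_self M).eigenvalues = σ * σ :=
    funext fun i => (Real.mul_self_sqrt (eigenvalues_conjTranspose_mul_self_nonneg M i)).symm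
  rw [hσ] at hNN
  set N := M * V
  refine ⟨V * diagonal σ⁻¹ * Nᴴ, ?_, ?_⟩
  · calc V * diagonal σ⁻¹ * Nᴴ * (V * diagonal σ⁻¹ * Nᴴ)ᴴ * (V * diagonal σ⁻¹ * Nᴴ)
        = V * (diagonal σ⁻¹ * (Nᴴ * N) * diagonal σ⁻¹ * (Vᴴ * V) * diagonal σ⁻¹) * Nᴴ := by
          simp only [conjTranspose_mul, conjTranspose_conjTranspose, diagonal_conjTranspose,
            star_trivial, Matrix.mul_assoc]
      _ = V * diagonal σ⁻¹ * Nᴴ := by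
          rw [hNN, hVV, Matrix.mul_one, diagonal_mul_diagonal, diagonal_mul_diagonal,
            diagonal_mul_diagonal]
          congr 3
          funext i
          rcases eq_or_ne (σ i) 0 with h | h <;> simp [h]
  · calc (V * diagonal σ⁻¹ * Nᴴ * M).trace = (V * (diagonal σ⁻¹ * Nᴴ * M)).trace := by
          simp only [Matrix.mul_assoc]
      _ = (diagonal σ⁻¹ * Nᴴ * M * V).trace := trace_mul_comm _ _
      _ = (diagonal σ⁻¹ * (Nᴴ * N)).trace := by simp only [N, Matrix.mul_assoc]
      _ = ∑ i, σ i := by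
          rw [hNN, diagonal_mul_diagonal, trace_diagonal]
          simp only [Pi.inv_apply, Pi.mul_apply, ← mul_assoc, inv_mul_mul_self]
      _ = nuclearNorm M := rfl

lemma nuclearNorm_mul_sq_le [DecidableEq n] (A : Matrix l m ℝ) (B : Matrix m n ℝ) :
    nuclearNorm (A * B) ^ 2 ≤ frobNorm A ^ 2 * frobNorm B ^ 2 := by
  obtain ⟨K, hK, htrace⟩ := exists_partialIsometry_trace_mul_eq_nuclearNorm (A * B)
  calc nuclearNorm (A * B) ^ 2 = ((B * K) * A).trace ^ 2 := by
        rw [← htrace, ← Matrix.mul_assoc, trace_mul_comm, Matrix.mul_assoc]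
    _ ≤ frobNorm (B * K) ^ 2 * frobNorm A ^ 2 := trace_mul_sq_le _ _
    _ ≤ frobNorm B ^ 2 * frobNorm A ^ 2 :=
        mul_le_mul_of_nonneg_right (frobNorm_mul_sq_le B hK) (sq_nonneg _)
    _ = frobNorm A ^ 2 * frobNorm B ^ 2 := mul_comm _ _

lemma suffix_mul_prefix_eq {R : Type*} [Semiring R] {ι : ℕ → Type*} [∀ i, Fintype (ι i)]
    {α β : Type*} {L : ℕ} (W : ∀ i, Matrix (ι (i + 1)) (ι i) R) (P : ∀ j, Matrix α (ι j) R)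
    (Q : ∀ j, Matrix (ι j) β R) (hP : ∀ j, j < L → P j = P (j + 1) * W j)
    (hQ : ∀ j, j < L → Q (j + 1) = W j * Q j) {j : ℕ} (hj : j ≤ L) :
    P j * Q j = P L * Q L := by
  induction hj using Nat.decreasingInduction with
  | self => rfl
  | of_succ k hk ih => rw [hP k hk, Matrix.mul_assoc, ← hQ k hk, ih]

end Matrix

/-- `P j` is the suffix product `W_L ⋯ W_{j+1}` and `Q j` the prefix product `W_j ⋯ W_1`, with the
layers indexed from `0`. -/
theorem frob_prod_ge_nuclear_general {L : ℕ} (d : ℕ → ℕ)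
    (W : ∀ i : ℕ, Matrix (Fin (d (i + 1))) (Fin (d i)) ℝ)
    (P : ∀ j : ℕ, Matrix (Fin (d L)) (Fin (d j)) ℝ)
    (Q : ∀ j : ℕ, Matrix (Fin (d j)) (Fin (d 0)) ℝ)
    (hPL : P L = 1) (hP : ∀ j, j < L → P j = P (j + 1) * W j)
    (hQ : ∀ j, j < L → Q (j + 1) = W j * Q j)
    (M : Matrix (Fin (d L)) (Fin (d 0)) ℝ) (hM : Q L = M) :
    ∀ j, 1 ≤ j → j ≤ L - 1 →
      nuclearNorm M ^ 2 ≤ frobNorm (P j) ^ 2 * frobNorm (Q j) ^ 2 := by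
  intro j _ hj
  have hPQ : P j * Q j = M := by
    rw [suffix_mul_prefix_eq W P Q hP hQ (by omega), hPL, Matrix.one_mul, hM]
  exact hPQ ▸ nuclearNorm_mul_sq_le (P j) (Q j)

/-- If W_L ⋯ W_1 = M then for every 1 ≤ j ≤ L-1,
    ‖W_L ⋯ W_{j+1}‖_F² · ‖W_j ⋯ W_1‖_F² ≥ ‖M‖_*².
    Here `P j` denotes the suffix product W_L ⋯ W_{j+1} and `Q j` the prefix
    product W_j ⋯ W_1 (with the layers 0-indexed in Lean). -/
theorem frob_prod_ge_nuclear {L : ℕ} (d : ℕ → ℕ)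
    (W : ∀ i : ℕ, Matrix (Fin (d (i + 1))) (Fin (d i)) ℝ)
    (P : ∀ j : ℕ, Matrix (Fin (d L)) (Fin (d j)) ℝ)
    (Q : ∀ j : ℕ, Matrix (Fin (d j)) (Fin (d 0)) ℝ)
    (hPL : P L = 1) (hP : ∀ j, j < L → P j = P (j + 1) * W j)
    (hQ0 : Q 0 = 1) (hQ : ∀ j, j < L → Q (j + 1) = W j * Q j)
    (M : Matrix (Fin (d L)) (Fin (d 0)) ℝ) (hM : Q L = M) :
    ∀ j, 1 ≤ j → j ≤ L - 1 →
      nuclearNorm M ^ 2 ≤ frobNorm (P j) ^ 2 * frobNorm (Q j) ^ 2 :=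
  frob_prod_ge_nuclear_general d W P Q hPL hP hQ M hM
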